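/- Let A be a commutative ring with finitely many maximal ideals and let B be an A-algebra that is finitely generated as an A-module. If b₁, …, b_d ∈ B are elements whose images generate B ⊗_A A/𝔪 as an A/𝔪-algebra for every maximal ideal 𝔪 of A, then b₁, …, b_d generate B as an A-algebra. -/

import Mathlib

/-!
Let `C` be the subalgebra generated by the `bᵢ`. The hypothesis says exactly that
`C + 𝔪B = B` for every maximal ideal `𝔪`, i.e. the finitely generated `A`-module `B/C`
satisfies `𝔪 (B/C) = B/C` for every `𝔪`. By Nakayama, for each `𝔪` some
`r ≡ 1 mod 𝔪` kills `B/C`, so the annihilator of `B/C` lies in no maximal ideal, and `B = C`.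
-/

theorem Module.subsingleton_of_forall_isMaximal_smul_top_eq_top {R M : Type*} [CommRing R]
    [AddCommGroup M] [Module R M] [Module.Finite R M]
    (h : ∀ 𝔪 : Ideal R, 𝔪.IsMaximal → 𝔪 • (⊤ : Submodule R M) = ⊤) : Subsingleton M := by
  rw [← Module.annihilator_eq_top_iff (R := R)]
  by_contra hann
  obtain ⟨𝔪, h𝔪, hann_le⟩ := Ideal.exists_le_maximal _ hann
  obtain ⟨r, hr_sub_one, hr⟩ := Submodule.exists_sub_one_mem_and_smul_eq_zero_of_fg_of_le_smul
    𝔪 ⊤ Module.Finite.fg_top (h 𝔪 h𝔪).ge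
  have hr_mem : r ∈ 𝔪 := hann_le (Module.mem_annihilator.mpr fun m => hr m trivial)
  exact h𝔪.ne_top ((Ideal.eq_top_iff_one _).mpr (by simpa using 𝔪.sub_mem hr_mem hr_sub_one))

theorem Submodule.eq_top_of_forall_isMaximal_sup_smul_top_eq_top {R M : Type*} [CommRing R]
    [AddCommGroup M] [Module R M] [Module.Finite R M] {N : Submodule R M}
    (h : ∀ 𝔪 : Ideal R, 𝔪.IsMaximal → N ⊔ 𝔪 • ⊤ = ⊤) : N = ⊤ := by
  rw [← Submodule.Quotient.subsingleton_iff]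
  refine Module.subsingleton_of_forall_isMaximal_smul_top_eq_top (R := R) fun 𝔪 h𝔪 => ?_
  simpa only [Submodule.map_sup, Submodule.mkQ_map_self, Submodule.map_smul'', Submodule.map_top,
    Submodule.range_mkQ, bot_sup_eq] using congr_arg (Submodule.map N.mkQ) (h 𝔪 h𝔪)

theorem Subalgebra.toSubmodule_sup_smul_top_eq_top {A B : Type*} [CommRing A] [CommRing B]
    [Algebra A B] {C : Subalgebra A B} {I : Ideal A}
    (hC : C.map (Ideal.Quotient.mkₐ A (I.map (algebraMap A B))) = ⊤) :
    Subalgebra.toSubmodule C ⊔ I • ⊤ = ⊤ := by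
  refine eq_top_iff.mpr fun x _ => ?_
  obtain ⟨c, hc, hcx⟩ : Ideal.Quotient.mkₐ A (I.map (algebraMap A B)) x ∈ C.map (Ideal.Quotient.mkₐ A _) :=
    hC ▸ Algebra.mem_top
  have hxc : x - c ∈ I.map (algebraMap A B) := Ideal.Quotient.eq.mp hcx.symm
  exact Submodule.mem_sup.mpr ⟨c, hc, x - c, (Ideal.smul_top_eq_map (S := B) I).symm ▸ hxc, add_sub_cancel c x⟩

theorem semilocal_adjoin_eq_top_of_adjoin_mod_maximal_eq_top_general
    {A B : Type*} [CommRing A] [CommRing B] [Algebra A B]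
    (hB : Module.Finite A B) {d : ℕ} (b : Fin d → B)
    (h : ∀ 𝔪 : Ideal A, 𝔪.IsMaximal →
      Algebra.adjoin A
        (Set.range fun i => Ideal.Quotient.mk (Ideal.map (algebraMap A B) 𝔪) (b i)) = ⊤) :
    Algebra.adjoin A (Set.range b) = ⊤ := by
  rw [← Algebra.toSubmodule_eq_top]
  refine Submodule.eq_top_of_forall_isMaximal_sup_smul_top_eq_top fun 𝔪 h𝔪 => ?_
  refine Subalgebra.toSubmodule_sup_smul_top_eq_top ?_
  rw [AlgHom.map_adjoin, ← Set.range_comp]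
  exact h 𝔪 h𝔪

/-- If `A` is a commutative ring with finitely many maximal ideals and `B` is an
`A`-algebra that is finitely generated as an `A`-module, and `b₁, …, b_d ∈ B` have
images generating `B/𝔪B` as an algebra over `A/𝔪` (equivalently, over `A`) for every
maximal ideal `𝔪` of `A`, then the `bᵢ` generate `B` as an `A`-algebra. -/
theorem semilocal_adjoin_eq_top_of_adjoin_mod_maximal_eq_top
    {A B : Type*} [CommRing A] [CommRing B] [Algebra A B]
    (hsemilocal : {I : Ideal A | I.IsMaximal}.Finite)
    (hB : Module.Finite A B) {d : ℕ} (b : Fin d → B)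
    (h : ∀ 𝔪 : Ideal A, 𝔪.IsMaximal →
      Algebra.adjoin A
        (Set.range fun i => Ideal.Quotient.mk (Ideal.map (algebraMap A B) 𝔪) (b i)) = ⊤) :
    Algebra.adjoin A (Set.range b) = ⊤ :=
  semilocal_adjoin_eq_top_of_adjoin_mod_maximal_eq_top_general hB b h
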